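/- Let 1 < p ≤ θ and let t₀ := √(pθ(p+1)/(θ+1)) + √(pθ(p+1)/(θ+1) − √(pθ(p+1)/(θ+1))). Then L(2t₀) = (16pθ(p+1)(θ−p)/(θ+1)²) · (1 − 2t₀). -/
import Mathlib


noncomputable section

/-- The quartic polynomial `L`. -/
def Lpoly (p θ s : ℝ) : ℝ :=
  s ^ 4 - (16 * p * θ * (p + 1) / (θ + 1)) * s ^ 2
    + (16 * p * θ * (p + 1) * (p + θ + 2) / (θ + 1) ^ 2) * s
    - 16 * p * θ * (p + 1) ^ 2 / (θ + 1) ^ 2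

/-- value of `L(2t₀)`. -/
theorem stmt6 (p θ t₀ : ℝ) (hp : 1 < p) (hpθ : p ≤ θ)
    (ht₀ : t₀ = Real.sqrt (p * θ * (p + 1) / (θ + 1)) +
      Real.sqrt (p * θ * (p + 1) / (θ + 1) - Real.sqrt (p * θ * (p + 1) / (θ + 1)))) :
    Lpoly p θ (2 * t₀) = 16 * p * θ * (p + 1) * (θ - p) / (θ + 1) ^ 2 * (1 - 2 * t₀) := by
  have hθ : (1:ℝ) < θ := lt_of_lt_of_le hp hpθ
  have hθ1 : (θ:ℝ) + 1 ≠ 0 := by positivity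
  set A : ℝ := p * θ * (p + 1) / (θ + 1) with hA
  have hA1 : 1 ≤ A := by
    rw [hA, le_div_iff₀ (by positivity : (0:ℝ) < θ + 1)]
    nlinarith [mul_lt_mul_of_pos_right (show (2:ℝ) < p * (p+1) by nlinarith) (show (0:ℝ) < θ by linarith)]
  have hA0 : 0 ≤ A := le_trans zero_le_one hA1
  set a : ℝ := Real.sqrt A with haa
  set b : ℝ := Real.sqrt (A - a) with hbb
  have ha : a ^ 2 = A := Real.sq_sqrt hA0
  have hsub : 0 ≤ A - a := by
    have h1 : a ≤ Real.sqrt (A ^ 2) := Real.sqrt_le_sqrt (by nlinarith)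
    rw [Real.sqrt_sq hA0] at h1
    linarith
  have hb : b ^ 2 = A - a := Real.sq_sqrt hsub
  have h3 : (θ + 1) * (θ + 1)⁻¹ = 1 := mul_inv_cancel₀ hθ1
  have h4 : (((θ + 1) ^ 2 : ℝ))⁻¹ = (θ + 1)⁻¹ ^ 2 := by rw [← inv_pow]
  rw [ht₀]
  show Lpoly p θ (2 * (a + b)) = _
  unfold Lpoly
  rw [hA] at ha hb
  linear_combination
    (16 - 64*b + 96*b^2 + 64*a*b + 16*a^2 - 48*p*θ*(θ+1)⁻¹ - 48*p^2*θ*(θ+1)⁻¹) * ha +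
    (16*b^2 - 16*a + 64*a*b + 48*p*θ*(θ+1)⁻¹ + 48*p^2*θ*(θ+1)⁻¹) * hb +
    (-16*p*θ*(θ+1)⁻¹ + 64*p*θ*b*(θ+1)⁻¹ + 64*p*θ*a*(θ+1)⁻¹ - 16*p^2*θ*(θ+1)⁻¹
      + 64*p^2*θ*b*(θ+1)⁻¹ + 64*p^2*θ*a*(θ+1)⁻¹) * h3 +
    (-16*p*θ*(1+p)*(1+θ)*(1 - 4*a - 4*b)) * h4
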